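/- arXiv:q-alg/9708010 — 3 statements merged into one kernel-verified Lean document; each statement's English description precedes it below -/
import Mathlib

section
/- Suppose μ : A ⊗ C ⊗ A → A ⊗ C makes A ⊗ C an A-bimodule (with left action m ⊗ C) and Δ' : C ⊗ A → C ⊗ A ⊗ C makes C ⊗ A a C-bicomodule (with left coaction Δ ⊗ A), and suppose (ε ⊗ A ⊗ C) ∘ Δ' = μ ∘ (η ⊗ C ⊗ A). Then the map ψ := (ε ⊗ A ⊗ C) ∘ Δ' : C ⊗ A → A ⊗ C satisfies the four axioms of an entwining structure (A, C, ψ). Conversely, every entwining map ψ arises this way, with μ = (m⊗C)∘(A⊗ψ) and Δ' = (C⊗ψ)∘(Δ⊗A), giving a one-to-one correspondence. -/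
/-!
An entwining `ψ` determines the pair `μ((a ⊗ c) ⊗ b) = a · ψ(c ⊗ b)` and
`Δ'(c ⊗ a) = c₍₁₎ ⊗ ψ(c₍₂₎ ⊗ a)`, and every compatible pair has this form: left `A`-linearity
of `μ` and `μ((1 ⊗ c) ⊗ b) = ψ(c ⊗ b)` force the first formula, and dually left `C`-colinearity
of `Δ'` followed by the counit forces the second. For maps of this shape left (co)linearity is
automatic, associativity and unitality of `μ` are equivalent to the two algebra axioms of `ψ`
(evaluate at `1 ⊗ c`), and coassociativity and counitality of `Δ'` are equivalent to the two
coalgebra axioms (apply `ε` to the first leg).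
-/

open TensorProduct LinearMap Coalgebra

variable {k A C : Type*} [Field k] [Ring A] [Algebra k A]
  [AddCommGroup C] [Module k C] [Coalgebra k C]

/-- The four axioms of an entwining structure `(A, C, ψ)`. -/
def IsEntwining (ψ : C ⊗[k] A →ₗ[k] A ⊗[k] C) : Prop :=
  (ψ ∘ₗ (LinearMap.mul' k A).lTensor C ∘ₗ (TensorProduct.assoc k C A A).toLinearMap
      = (LinearMap.mul' k A).rTensor C ∘ₗ (TensorProduct.assoc k A A C).symm.toLinearMap
        ∘ₗ ψ.lTensor A ∘ₗ (TensorProduct.assoc k A C A).toLinearMap ∘ₗ ψ.rTensor A)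
  ∧ (∀ c : C, ψ (c ⊗ₜ[k] (1 : A)) = (1 : A) ⊗ₜ[k] c)
  ∧ ((comul (R := k) (A := C)).lTensor A ∘ₗ ψ
      = (TensorProduct.assoc k A C C).toLinearMap ∘ₗ ψ.rTensor C
        ∘ₗ (TensorProduct.assoc k C A C).symm.toLinearMap ∘ₗ ψ.lTensor C
        ∘ₗ (TensorProduct.assoc k C C A).toLinearMap ∘ₗ (comul (R := k) (A := C)).rTensor A)
  ∧ ((TensorProduct.rid k A).toLinearMap ∘ₗ (counit (R := k) (A := C)).lTensor A ∘ₗ ψ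
      = (TensorProduct.lid k A).toLinearMap ∘ₗ (counit (R := k) (A := C)).rTensor A)

/-- `(ε ⊗ A ⊗ C) : (C ⊗ A) ⊗ C → A ⊗ C`. -/
noncomputable def epsAC (k A C : Type*) [Field k] [Ring A] [Algebra k A]
    [AddCommGroup C] [Module k C] [Coalgebra k C] :
    (C ⊗[k] A) ⊗[k] C →ₗ[k] A ⊗[k] C :=
  ((TensorProduct.lid k A).toLinearMap ∘ₗ (counit (R := k) (A := C)).rTensor A).rTensor C

/-- `(η ⊗ C ⊗ A) : C ⊗ A → (A ⊗ C) ⊗ A`, `c ⊗ a ↦ (1 ⊗ c) ⊗ a`. -/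
noncomputable def etaCA (k A C : Type*) [Field k] [Ring A] [Algebra k A]
    [AddCommGroup C] [Module k C] [Coalgebra k C] :
    C ⊗[k] A →ₗ[k] (A ⊗[k] C) ⊗[k] A :=
  ((Algebra.linearMap k A).rTensor C ∘ₗ (TensorProduct.lid k C).symm.toLinearMap).rTensor A

/-- The hypotheses of Proposition 2.5: `μ` makes `A ⊗ C` an `A`-bimodule (with left
action `m ⊗ C`), `Δ'` makes `C ⊗ A` a `C`-bicomodule (with left coaction `Δ ⊗ A`),
and `(ε ⊗ A ⊗ C) ∘ Δ' = μ ∘ (η ⊗ C ⊗ A)`. -/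
def IsCompatiblePair (μ : (A ⊗[k] C) ⊗[k] A →ₗ[k] A ⊗[k] C)
    (Δ' : C ⊗[k] A →ₗ[k] (C ⊗[k] A) ⊗[k] C) : Prop :=
  letI lact : A ⊗[k] (A ⊗[k] C) →ₗ[k] A ⊗[k] C :=
    (LinearMap.mul' k A).rTensor C ∘ₗ (TensorProduct.assoc k A A C).symm.toLinearMap
  letI lcoact : C ⊗[k] A →ₗ[k] C ⊗[k] (C ⊗[k] A) :=
    (TensorProduct.assoc k C C A).toLinearMap ∘ₗ (comul (R := k) (A := C)).rTensor A
  (∀ w : A ⊗[k] C, μ (w ⊗ₜ[k] (1 : A)) = w)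
  ∧ (μ ∘ₗ μ.rTensor A
      = μ ∘ₗ (LinearMap.mul' k A).lTensor (A ⊗[k] C)
          ∘ₗ (TensorProduct.assoc k (A ⊗[k] C) A A).toLinearMap)
  ∧ (μ ∘ₗ lact.rTensor A
      = lact ∘ₗ μ.lTensor A ∘ₗ (TensorProduct.assoc k A (A ⊗[k] C) A).toLinearMap)
  ∧ ((comul (R := k) (A := C)).lTensor (C ⊗[k] A) ∘ₗ Δ'
      = (TensorProduct.assoc k (C ⊗[k] A) C C).toLinearMap ∘ₗ Δ'.rTensor C ∘ₗ Δ')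
  ∧ ((TensorProduct.rid k (C ⊗[k] A)).toLinearMap
      ∘ₗ (counit (R := k) (A := C)).lTensor (C ⊗[k] A) ∘ₗ Δ' = LinearMap.id)
  ∧ (Δ'.lTensor C ∘ₗ lcoact
      = (TensorProduct.assoc k C (C ⊗[k] A) C).toLinearMap ∘ₗ lcoact.rTensor C ∘ₗ Δ')
  ∧ (epsAC k A C ∘ₗ Δ' = μ ∘ₗ etaCA k A C)

section Action

variable {R B V : Type*} [CommSemiring R] [Semiring B] [Algebra R B]
  [AddCommMonoid V] [Module R V]

variable (R B V) in
noncomputable def leftMul : B ⊗[R] (B ⊗[R] V) →ₗ[R] B ⊗[R] V :=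
  (LinearMap.mul' R B).rTensor V ∘ₗ (TensorProduct.assoc R B B V).symm.toLinearMap

@[simp] lemma leftMul_tmul (a b : B) (v : V) :
    leftMul R B V (a ⊗ₜ (b ⊗ₜ v)) = (a * b) ⊗ₜ v := by
  simp [leftMul]

lemma leftMul_one_tmul (w : B ⊗[R] V) : leftMul R B V (1 ⊗ₜ w) = w := by
  induction w using TensorProduct.induction_on with
  | zero => simp
  | tmul b v => simp
  | add u v hu hv => rw [tmul_add, map_add, hu, hv]

lemma leftMul_tmul_leftMul (a b : B) (w : B ⊗[R] V) :
    leftMul R B V (a ⊗ₜ leftMul R B V (b ⊗ₜ w)) = leftMul R B V ((a * b) ⊗ₜ w) := by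
  induction w using TensorProduct.induction_on with
  | zero => simp
  | tmul c v => simp [mul_assoc]
  | add u v hu hv => simp only [tmul_add, map_add, hu, hv]

noncomputable def rightActionOf (ψ : V ⊗[R] B →ₗ[R] B ⊗[R] V) :
    (B ⊗[R] V) ⊗[R] B →ₗ[R] B ⊗[R] V :=
  (LinearMap.mul' R B).rTensor V ∘ₗ (TensorProduct.assoc R B B V).symm.toLinearMap
    ∘ₗ ψ.lTensor B ∘ₗ (TensorProduct.assoc R B V B).toLinearMap

variable (ψ : V ⊗[R] B →ₗ[R] B ⊗[R] V)

@[simp] lemma rightActionOf_tmul (a : B) (v : V) (b : B) :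
    rightActionOf ψ ((a ⊗ₜ v) ⊗ₜ b) = leftMul R B V (a ⊗ₜ ψ (v ⊗ₜ b)) := rfl

lemma rightActionOf_one_tmul (v : V) (b : B) : rightActionOf ψ ((1 ⊗ₜ v) ⊗ₜ b) = ψ (v ⊗ₜ b) := by
  rw [rightActionOf_tmul, leftMul_one_tmul]

lemma rightActionOf_leftMul_tmul (a : B) (w : B ⊗[R] V) (b : B) :
    rightActionOf ψ (leftMul R B V (a ⊗ₜ w) ⊗ₜ b)
      = leftMul R B V (a ⊗ₜ rightActionOf ψ (w ⊗ₜ b)) := by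
  induction w using TensorProduct.induction_on with
  | zero => simp
  | tmul c v => simp only [leftMul_tmul, rightActionOf_tmul, leftMul_tmul_leftMul]
  | add u v hu hv => simp only [tmul_add, add_tmul, map_add, hu, hv]

lemma rightActionOf_comp_rTensor_leftMul :
    rightActionOf ψ ∘ₗ (leftMul R B V).rTensor B
      = leftMul R B V ∘ₗ (rightActionOf ψ).lTensor B
        ∘ₗ (TensorProduct.assoc R B (B ⊗[R] V) B).toLinearMap :=
  TensorProduct.ext_threefold fun a w b => rightActionOf_leftMul_tmul ψ a w b

lemma eq_rightActionOf_of_comp_rTensor_leftMul {μ : (B ⊗[R] V) ⊗[R] B →ₗ[R] B ⊗[R] V}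
    (hμ : μ ∘ₗ (leftMul R B V).rTensor B
      = leftMul R B V ∘ₗ μ.lTensor B ∘ₗ (TensorProduct.assoc R B (B ⊗[R] V) B).toLinearMap)
    (hψ : ∀ v b, μ ((1 ⊗ₜ v) ⊗ₜ b) = ψ (v ⊗ₜ b)) :
    μ = rightActionOf ψ := by
  refine TensorProduct.ext_threefold fun a v b => ?_
  have h := LinearMap.congr_fun hμ ((a ⊗ₜ (1 ⊗ₜ v)) ⊗ₜ b)
  simp only [coe_comp, Function.comp_apply, rTensor_tmul, leftMul_tmul, mul_one,
    LinearEquiv.coe_coe, assoc_tmul, lTensor_tmul, hψ] at h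
  rw [h, rightActionOf_tmul]

lemma rightActionOf_tmul_one_iff :
    (∀ w, rightActionOf ψ (w ⊗ₜ 1) = w) ↔ ∀ v, ψ (v ⊗ₜ 1) = 1 ⊗ₜ v := by
  refine ⟨fun h v => by rw [← rightActionOf_one_tmul, h], fun h w => ?_⟩
  induction w using TensorProduct.induction_on with
  | zero => simp
  | tmul a v => rw [rightActionOf_tmul, h, leftMul_tmul, mul_one]
  | add u v hu hv => rw [add_tmul, map_add, hu, hv]

lemma rightActionOf_assoc_iff :
    rightActionOf ψ ∘ₗ (rightActionOf ψ).rTensor B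
        = rightActionOf ψ ∘ₗ (LinearMap.mul' R B).lTensor (B ⊗[R] V)
          ∘ₗ (TensorProduct.assoc R (B ⊗[R] V) B B).toLinearMap
      ↔ ψ ∘ₗ (LinearMap.mul' R B).lTensor V ∘ₗ (TensorProduct.assoc R V B B).toLinearMap
        = rightActionOf ψ ∘ₗ ψ.rTensor B := by
  -- both sides of the associativity law at `((a ⊗ v) ⊗ b) ⊗ b'` are `a` times those of the
  -- entwining law at `(v ⊗ b) ⊗ b'`
  have key : ∀ a v b b', (rightActionOf ψ ∘ₗ (rightActionOf ψ).rTensor B) (((a ⊗ₜ v) ⊗ₜ b) ⊗ₜ b')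
      = leftMul R B V (a ⊗ₜ (rightActionOf ψ ∘ₗ ψ.rTensor B) ((v ⊗ₜ b) ⊗ₜ b'))
      ∧ (rightActionOf ψ ∘ₗ (LinearMap.mul' R B).lTensor (B ⊗[R] V)
          ∘ₗ (TensorProduct.assoc R (B ⊗[R] V) B B).toLinearMap) (((a ⊗ₜ v) ⊗ₜ b) ⊗ₜ b')
      = leftMul R B V (a ⊗ₜ (ψ ∘ₗ (LinearMap.mul' R B).lTensor V
          ∘ₗ (TensorProduct.assoc R V B B).toLinearMap) ((v ⊗ₜ b) ⊗ₜ b')) := by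
    intro a v b b'
    constructor
    · simp only [coe_comp, Function.comp_apply, rTensor_tmul, rightActionOf_tmul,
        rightActionOf_leftMul_tmul]
    · simp
  constructor
  · refine fun h => TensorProduct.ext_threefold fun v b b' => ?_
    have := LinearMap.congr_fun h (((1 ⊗ₜ v) ⊗ₜ b) ⊗ₜ b')
    rwa [(key 1 v b b').1, (key 1 v b b').2, leftMul_one_tmul, leftMul_one_tmul, eq_comm] at this
  · refine fun h => TensorProduct.ext_fourfold fun a v b b' => ?_
    rw [(key a v b b').1, (key a v b b').2, h]

end Action

section Coaction

variable {R D : Type*} [CommSemiring R] [AddCommMonoid D] [Module R D]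
  {X Y : Type*} [AddCommMonoid X] [Module R X] [AddCommMonoid Y] [Module R Y]

lemma assoc_symm_lTensor_assoc_rTensor_assoc {M N P : Type*} [AddCommMonoid M] [Module R M]
    [AddCommMonoid N] [Module R N] [AddCommMonoid P] [Module R P] (f : Y →ₗ[R] X ⊗[R] N)
    (u : (M ⊗[R] Y) ⊗[R] P) :
    (TensorProduct.assoc R M X (N ⊗[R] P)).symm
        (((TensorProduct.assoc R X N P).toLinearMap ∘ₗ f.rTensor P).lTensor M
          (TensorProduct.assoc R M Y P u))
      = TensorProduct.assoc R (M ⊗[R] X) N P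
          (((TensorProduct.assoc R M X N).symm.toLinearMap ∘ₗ f.lTensor M).rTensor P u) := by
  have : (TensorProduct.assoc R M X (N ⊗[R] P)).symm.toLinearMap
        ∘ₗ ((TensorProduct.assoc R X N P).toLinearMap ∘ₗ f.rTensor P).lTensor M
        ∘ₗ (TensorProduct.assoc R M Y P).toLinearMap
      = (TensorProduct.assoc R (M ⊗[R] X) N P).toLinearMap
        ∘ₗ ((TensorProduct.assoc R M X N).symm.toLinearMap ∘ₗ f.lTensor M).rTensor P := by
    refine TensorProduct.ext_threefold fun m y p => ?_
    simp only [coe_comp, Function.comp_apply, LinearEquiv.coe_coe, assoc_tmul, lTensor_tmul,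
      rTensor_tmul]
    induction f y using TensorProduct.induction_on with
    | zero => simp
    | tmul x n => simp
    | add v w hv hw => simp only [add_tmul, tmul_add, map_add, hv, hw]
  exact LinearMap.congr_fun this u

section CoalgebraStruct

variable [CoalgebraStruct R D]

variable (R D X) in
noncomputable def counitLeft : D ⊗[R] X →ₗ[R] X :=
  (TensorProduct.lid R X).toLinearMap ∘ₗ (counit (R := R) (A := D)).rTensor X

variable (R D X) in
noncomputable def counitRight : X ⊗[R] D →ₗ[R] X :=
  (TensorProduct.rid R X).toLinearMap ∘ₗ (counit (R := R) (A := D)).lTensor X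

variable (R D X) in
noncomputable def leftComul : D ⊗[R] X →ₗ[R] D ⊗[R] (D ⊗[R] X) :=
  (TensorProduct.assoc R D D X).toLinearMap ∘ₗ (comul (R := R) (A := D)).rTensor X

@[simp] lemma counitLeft_tmul (d : D) (x : X) :
    counitLeft R D X (d ⊗ₜ x) = counit (R := R) d • x := by
  simp [counitLeft]

@[simp] lemma counitRight_tmul (x : X) (d : D) :
    counitRight R D X (x ⊗ₜ d) = counit (R := R) d • x := by
  simp [counitRight]

lemma leftComul_tmul (d : D) (x : X) :
    leftComul R D X (d ⊗ₜ x) = ∑ i ∈ (ℛ R d).index, (ℛ R d).left i ⊗ₜ ((ℛ R d).right i ⊗ₜ x) := by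
  simp [leftComul, ← (ℛ R d).eq, sum_tmul]

lemma counitLeft_lTensor (f : X →ₗ[R] Y) (t : D ⊗[R] X) :
    counitLeft R D Y (f.lTensor D t) = f (counitLeft R D X t) := by
  induction t using TensorProduct.induction_on with
  | zero => simp
  | tmul d x => simp
  | add u v hu hv => simp only [map_add, hu, hv]

lemma leftComul_lTensor (f : X →ₗ[R] Y) (t : D ⊗[R] X) :
    leftComul R D Y (f.lTensor D t) = (f.lTensor D).lTensor D (leftComul R D X t) := by
  induction t using TensorProduct.induction_on with
  | zero => simp
  | tmul d x => simp [leftComul_tmul]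
  | add u v hu hv => simp only [map_add, hu, hv]

lemma rTensor_counitLeft_assoc_symm (s : D ⊗[R] (X ⊗[R] Y)) :
    (counitLeft R D X).rTensor Y ((TensorProduct.assoc R D X Y).symm s)
      = counitLeft R D (X ⊗[R] Y) s := by
  have : (counitLeft R D X).rTensor Y ∘ₗ (TensorProduct.assoc R D X Y).symm.toLinearMap
      = counitLeft R D (X ⊗[R] Y) :=
    TensorProduct.ext_threefold' fun d x y => by simp [smul_tmul']
  exact LinearMap.congr_fun this s

lemma counitRight_assoc_symm (s : X ⊗[R] (Y ⊗[R] D)) :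
    counitRight R D (X ⊗[R] Y) ((TensorProduct.assoc R X Y D).symm s)
      = (counitRight R D Y).lTensor X s := by
  have : counitRight R D (X ⊗[R] Y) ∘ₗ (TensorProduct.assoc R X Y D).symm.toLinearMap
      = (counitRight R D Y).lTensor X :=
    TensorProduct.ext_threefold' fun x y d => by simp
  exact LinearMap.congr_fun this s

lemma counitRight_rTensor_counitLeft (u : (D ⊗[R] X) ⊗[R] D) :
    counitRight R D X ((counitLeft R D X).rTensor D u)
      = counitLeft R D X (counitRight R D (D ⊗[R] X) u) := by
  have : counitRight R D X ∘ₗ (counitLeft R D X).rTensor D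
      = counitLeft R D X ∘ₗ counitRight R D (D ⊗[R] X) :=
    TensorProduct.ext_threefold fun d x e => by simp [smul_smul, mul_comm]
  exact LinearMap.congr_fun this u

lemma lTensor_assoc_symm_leftComul (s : D ⊗[R] (X ⊗[R] Y)) :
    (TensorProduct.assoc R D X Y).symm.toLinearMap.lTensor D (leftComul R D (X ⊗[R] Y) s)
      = TensorProduct.assoc R D (D ⊗[R] X) Y
          ((leftComul R D X).rTensor Y ((TensorProduct.assoc R D X Y).symm s)) := by
  have : (TensorProduct.assoc R D X Y).symm.toLinearMap.lTensor D ∘ₗ leftComul R D (X ⊗[R] Y)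
      = (TensorProduct.assoc R D (D ⊗[R] X) Y).toLinearMap ∘ₗ (leftComul R D X).rTensor Y
        ∘ₗ (TensorProduct.assoc R D X Y).symm.toLinearMap :=
    TensorProduct.ext_threefold' fun d x y => by simp [leftComul_tmul, sum_tmul]
  exact LinearMap.congr_fun this s

end CoalgebraStruct

variable [Coalgebra R D]

lemma counitLeft_leftComul (t : D ⊗[R] X) :
    counitLeft R D (D ⊗[R] X) (leftComul R D X t) = t := by
  induction t using TensorProduct.induction_on with
  | zero => simp
  | tmul d x =>
    simp only [leftComul_tmul, map_sum, counitLeft_tmul, smul_tmul', ← sum_tmul, sum_counit_smul]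
  | add u v hu hv => simp only [map_add, hu, hv]

lemma lTensor_counitLeft_leftComul (t : D ⊗[R] X) :
    (counitLeft R D X).lTensor D (leftComul R D X t) = t := by
  induction t using TensorProduct.induction_on with
  | zero => simp
  | tmul d x =>
    have h := congrArg ((LinearMap.toSpanSingleton R X x).lTensor D) (sum_tmul_counit_eq (ℛ R d))
    simp only [map_sum, lTensor_tmul, toSpanSingleton_apply, one_smul] at h
    simpa only [leftComul_tmul, map_sum, lTensor_tmul, counitLeft_tmul] using h
  | add u v hu hv => simp only [map_add, hu, hv]

lemma lTensor_leftComul_leftComul (t : D ⊗[R] X) :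
    (leftComul R D X).lTensor D (leftComul R D X t)
      = leftComul R D (D ⊗[R] X) (leftComul R D X t) := by
  induction t using TensorProduct.induction_on with
  | zero => simp
  | tmul d x =>
    have h := congrArg (((TensorProduct.mk R D X).flip x).lTensor D |>.lTensor D)
      (Coalgebra.sum_tmul_tmul_eq (ℛ R d) (fun i => ℛ R ((ℛ R d).left i))
        (fun i => ℛ R ((ℛ R d).right i)))
    simp only [map_sum, lTensor_tmul, flip_apply, mk_apply] at h
    simp only [leftComul_tmul, map_sum, lTensor_tmul, tmul_sum]
    exact h.symm
  | add u v hu hv => simp only [map_add, hu, hv]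

noncomputable def rightCoactionOf (ψ : D ⊗[R] X →ₗ[R] X ⊗[R] D) :
    D ⊗[R] X →ₗ[R] (D ⊗[R] X) ⊗[R] D :=
  (TensorProduct.assoc R D X D).symm.toLinearMap ∘ₗ ψ.lTensor D
    ∘ₗ (TensorProduct.assoc R D D X).toLinearMap ∘ₗ (comul (R := R) (A := D)).rTensor X

variable (ψ : D ⊗[R] X →ₗ[R] X ⊗[R] D)

lemma rightCoactionOf_apply (t : D ⊗[R] X) :
    rightCoactionOf ψ t = (TensorProduct.assoc R D X D).symm (ψ.lTensor D (leftComul R D X t)) :=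
  rfl

lemma rTensor_counitLeft_rightCoactionOf (t : D ⊗[R] X) :
    (counitLeft R D X).rTensor D (rightCoactionOf ψ t) = ψ t := by
  rw [rightCoactionOf_apply, rTensor_counitLeft_assoc_symm, counitLeft_lTensor,
    counitLeft_leftComul]

lemma rTensor_counitLeft_comp_rightCoactionOf :
    (counitLeft R D X).rTensor D ∘ₗ rightCoactionOf ψ = ψ :=
  LinearMap.ext (rTensor_counitLeft_rightCoactionOf ψ)

lemma lTensor_rightCoactionOf_leftComul (t : D ⊗[R] X) :
    (rightCoactionOf ψ).lTensor D (leftComul R D X t)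
      = TensorProduct.assoc R D (D ⊗[R] X) D
          ((leftComul R D X).rTensor D (rightCoactionOf ψ t)) := by
  have hsplit : rightCoactionOf ψ = (TensorProduct.assoc R D X D).symm.toLinearMap
      ∘ₗ ψ.lTensor D ∘ₗ leftComul R D X := rfl
  simp only [hsplit, coe_comp, Function.comp_apply, lTensor_comp_apply, LinearEquiv.coe_coe]
  rw [lTensor_leftComul_leftComul, ← leftComul_lTensor, lTensor_assoc_symm_leftComul]

lemma lTensor_rightCoactionOf_comp_leftComul :
    (rightCoactionOf ψ).lTensor D ∘ₗ leftComul R D X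
      = (TensorProduct.assoc R D (D ⊗[R] X) D).toLinearMap ∘ₗ (leftComul R D X).rTensor D
        ∘ₗ rightCoactionOf ψ :=
  LinearMap.ext (lTensor_rightCoactionOf_leftComul ψ)

lemma eq_rightCoactionOf_of_lTensor_comp_leftComul {Δ' : D ⊗[R] X →ₗ[R] (D ⊗[R] X) ⊗[R] D}
    (h : Δ'.lTensor D ∘ₗ leftComul R D X
      = (TensorProduct.assoc R D (D ⊗[R] X) D).toLinearMap ∘ₗ (leftComul R D X).rTensor D ∘ₗ Δ') :
    Δ' = rightCoactionOf ((counitLeft R D X).rTensor D ∘ₗ Δ') := by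
  have hcounit : (counitLeft R D X).lTensor D ∘ₗ leftComul R D X = LinearMap.id :=
    LinearMap.ext lTensor_counitLeft_leftComul
  refine LinearMap.ext fun t => (TensorProduct.assoc R D X D).injective ?_
  symm
  calc TensorProduct.assoc R D X D (rightCoactionOf ((counitLeft R D X).rTensor D ∘ₗ Δ') t)
      = ((counitLeft R D X).rTensor D).lTensor D (Δ'.lTensor D (leftComul R D X t)) := by
        rw [rightCoactionOf_apply, LinearEquiv.apply_symm_apply, lTensor_comp_apply]
    _ = ((counitLeft R D X).rTensor D).lTensor D
          (TensorProduct.assoc R D (D ⊗[R] X) D ((leftComul R D X).rTensor D (Δ' t))) := by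
        rw [← LinearMap.comp_apply (Δ'.lTensor D), h]
        rfl
    _ = TensorProduct.assoc R D X D
          (((counitLeft R D X).lTensor D ∘ₗ leftComul R D X).rTensor D (Δ' t)) := by
        rw [rTensor_comp_apply]
        exact LinearMap.congr_fun (lTensor_rTensor_comp_assoc _ _) _
    _ = TensorProduct.assoc R D X D (Δ' t) := by rw [hcounit, rTensor_id_apply]

lemma rightCoactionOf_counit_iff :
    counitRight R D (D ⊗[R] X) ∘ₗ rightCoactionOf ψ = LinearMap.id
      ↔ counitRight R D X ∘ₗ ψ = counitLeft R D X := by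
  constructor
  · refine fun h => LinearMap.ext fun t => ?_
    rw [coe_comp, Function.comp_apply, ← rTensor_counitLeft_rightCoactionOf,
      counitRight_rTensor_counitLeft, ← LinearMap.comp_apply (counitRight R D (D ⊗[R] X)), h,
      id_apply]
  · refine fun h => LinearMap.ext fun t => ?_
    rw [coe_comp, Function.comp_apply, rightCoactionOf_apply, counitRight_assoc_symm,
      ← lTensor_comp_apply, h, lTensor_counitLeft_leftComul, id_apply]

lemma rightCoactionOf_coassoc_iff :
    (comul (R := R) (A := D)).lTensor (D ⊗[R] X) ∘ₗ rightCoactionOf ψ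
        = (TensorProduct.assoc R (D ⊗[R] X) D D).toLinearMap ∘ₗ (rightCoactionOf ψ).rTensor D
          ∘ₗ rightCoactionOf ψ
      ↔ (comul (R := R) (A := D)).lTensor X ∘ₗ ψ
        = (TensorProduct.assoc R X D D).toLinearMap ∘ₗ ψ.rTensor D ∘ₗ rightCoactionOf ψ := by
  constructor
  · refine fun h => LinearMap.ext fun t => ?_
    have hcomm := LinearMap.congr_fun ((lTensor_comp_rTensor _ (counitLeft R D X)
      (comul (R := R) (A := D))).trans (rTensor_comp_lTensor _ _ _).symm) (rightCoactionOf ψ t)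
    simp only [coe_comp, Function.comp_apply] at hcomm ⊢
    rw [← rTensor_counitLeft_rightCoactionOf, hcomm, ← LinearMap.comp_apply _ (rightCoactionOf ψ),
      h, rTensor_tensor]
    simp only [coe_comp, Function.comp_apply, LinearEquiv.coe_coe, LinearEquiv.symm_apply_apply]
    rw [← rTensor_comp_apply, rTensor_counitLeft_comp_rightCoactionOf]
  · refine fun h => LinearMap.ext fun t => ?_
    calc (comul (R := R) (A := D)).lTensor (D ⊗[R] X) (rightCoactionOf ψ t)
        = (TensorProduct.assoc R D X (D ⊗[R] D)).symm
            (((comul (R := R) (A := D)).lTensor X ∘ₗ ψ).lTensor D (leftComul R D X t)) := by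
          rw [rightCoactionOf_apply, lTensor_tensor]
          simp only [coe_comp, Function.comp_apply, LinearEquiv.coe_coe,
            LinearEquiv.apply_symm_apply, lTensor_comp_apply]
      _ = (TensorProduct.assoc R D X (D ⊗[R] D)).symm
            (((TensorProduct.assoc R X D D).toLinearMap ∘ₗ ψ.rTensor D).lTensor D
              (TensorProduct.assoc R D (D ⊗[R] X) D
                ((leftComul R D X).rTensor D (rightCoactionOf ψ t)))) := by
          rw [h, ← lTensor_rightCoactionOf_leftComul, ← lTensor_comp_apply]
          rfl
      _ = TensorProduct.assoc R (D ⊗[R] X) D D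
            ((rightCoactionOf ψ).rTensor D (rightCoactionOf ψ t)) := by
          rw [assoc_symm_lTensor_assoc_rTensor_assoc, ← rTensor_comp_apply]
          rfl

end Coaction

lemma rightActionOf_comp_etaCA (ψ : C ⊗[k] A →ₗ[k] A ⊗[k] C) :
    rightActionOf ψ ∘ₗ etaCA k A C = ψ :=
  TensorProduct.ext' fun c a => by simp [etaCA, leftMul_one_tmul]

namespace IsCompatiblePair

variable {μ : (A ⊗[k] C) ⊗[k] A →ₗ[k] A ⊗[k] C} {Δ' : C ⊗[k] A →ₗ[k] (C ⊗[k] A) ⊗[k] C}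

lemma eq_rightActionOf (h : IsCompatiblePair μ Δ') : μ = rightActionOf (epsAC k A C ∘ₗ Δ') := by
  obtain ⟨-, -, hlinear, -, -, -, hψ⟩ := h
  exact eq_rightActionOf_of_comp_rTensor_leftMul _ hlinear fun c a => by
    simpa [etaCA] using (LinearMap.congr_fun hψ (c ⊗ₜ a)).symm

lemma eq_rightCoactionOf (h : IsCompatiblePair μ Δ') :
    Δ' = rightCoactionOf (epsAC k A C ∘ₗ Δ') := by
  obtain ⟨-, -, -, -, -, hcolinear, -⟩ := h
  exact eq_rightCoactionOf_of_lTensor_comp_leftComul hcolinear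

lemma isEntwining (h : IsCompatiblePair μ Δ') : IsEntwining (epsAC k A C ∘ₗ Δ') := by
  have hμ := h.eq_rightActionOf
  have hΔ := h.eq_rightCoactionOf
  obtain ⟨hunit, hassoc, -, hcoassoc, hcounit, -, -⟩ := h
  rw [hμ] at hunit hassoc
  rw [hΔ] at hcoassoc hcounit
  exact ⟨(rightActionOf_assoc_iff _).1 hassoc, (rightActionOf_tmul_one_iff _).1 hunit,
    (rightCoactionOf_coassoc_iff _).1 hcoassoc, (rightCoactionOf_counit_iff _).1 hcounit⟩

end IsCompatiblePair

lemma IsEntwining.isCompatiblePair {ψ : C ⊗[k] A →ₗ[k] A ⊗[k] C} (h : IsEntwining ψ) :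
    IsCompatiblePair (rightActionOf ψ) (rightCoactionOf ψ) := by
  obtain ⟨hmul, hone, hcomul, hcounit⟩ := h
  exact ⟨(rightActionOf_tmul_one_iff ψ).2 hone, (rightActionOf_assoc_iff ψ).2 hmul,
    rightActionOf_comp_rTensor_leftMul ψ, (rightCoactionOf_coassoc_iff ψ).2 hcomul,
    (rightCoactionOf_counit_iff ψ).2 hcounit, lTensor_rightCoactionOf_comp_leftComul ψ,
    (rTensor_counitLeft_comp_rightCoactionOf ψ).trans (rightActionOf_comp_etaCA ψ).symm⟩

/-- Proposition 2.5: compatible pairs `(μ, Δ')` are in one-to-one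
correspondence with entwining structures `(A, C, ψ)`, via
`ψ = (ε ⊗ A ⊗ C) ∘ Δ' = μ ∘ (η ⊗ C ⊗ A)`, `μ = (m ⊗ C) ∘ (A ⊗ ψ)` and
`Δ' = (C ⊗ ψ) ∘ (Δ ⊗ A)`. -/
theorem entwining_bijective_correspondence :
    (∀ (μ : (A ⊗[k] C) ⊗[k] A →ₗ[k] A ⊗[k] C)
       (Δ' : C ⊗[k] A →ₗ[k] (C ⊗[k] A) ⊗[k] C),
      IsCompatiblePair μ Δ' →
        IsEntwining (epsAC k A C ∘ₗ Δ')
        ∧ μ = (LinearMap.mul' k A).rTensor C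
            ∘ₗ (TensorProduct.assoc k A A C).symm.toLinearMap
            ∘ₗ (epsAC k A C ∘ₗ Δ').lTensor A ∘ₗ (TensorProduct.assoc k A C A).toLinearMap
        ∧ Δ' = (TensorProduct.assoc k C A C).symm.toLinearMap
            ∘ₗ (epsAC k A C ∘ₗ Δ').lTensor C
            ∘ₗ (TensorProduct.assoc k C C A).toLinearMap
            ∘ₗ (comul (R := k) (A := C)).rTensor A)
    ∧ (∀ ψ : C ⊗[k] A →ₗ[k] A ⊗[k] C, IsEntwining ψ →
        IsCompatiblePair
          ((LinearMap.mul' k A).rTensor C ∘ₗ (TensorProduct.assoc k A A C).symm.toLinearMap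
            ∘ₗ ψ.lTensor A ∘ₗ (TensorProduct.assoc k A C A).toLinearMap)
          ((TensorProduct.assoc k C A C).symm.toLinearMap ∘ₗ ψ.lTensor C
            ∘ₗ (TensorProduct.assoc k C C A).toLinearMap
            ∘ₗ (comul (R := k) (A := C)).rTensor A)
        ∧ epsAC k A C ∘ₗ ((TensorProduct.assoc k C A C).symm.toLinearMap ∘ₗ ψ.lTensor C
            ∘ₗ (TensorProduct.assoc k C C A).toLinearMap
            ∘ₗ (comul (R := k) (A := C)).rTensor A) = ψ) :=
  ⟨fun _ _ h => ⟨h.isEntwining, h.eq_rightActionOf, h.eq_rightCoactionOf⟩,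
    fun ψ h => ⟨h.isCompatiblePair, rTensor_counitLeft_comp_rightCoactionOf ψ⟩⟩
end

section
/- Let B ⊆ A be a C-Galois extension. Then the map ψ : C ⊗ A → A ⊗ C defined by ψ(c ⊗ a) = c^{(1)}·((c^{(2)}a)_{(0)}) ⊗ (c^{(2)}a)_{(1)} = can ∘ (A ⊗_B m) ∘ (τ ⊗ A), where τ = can^{-1}(1 ⊗ −) is the translation map, is an entwining map: it satisfies ψ∘(C⊗m) = (m⊗C)∘(A⊗ψ)∘(ψ⊗A), ψ∘(C⊗η) = η⊗C, (A⊗Δ)∘ψ = (ψ⊗C)∘(C⊗ψ)∘(Δ⊗A), and (A⊗ε)∘ψ = ε⊗A. -/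
open TensorProduct LinearMap Coalgebra

variable {k A C : Type*} [Field k] [Ring A] [Algebra k A]
  [AddCommGroup C] [Module k C] [Coalgebra k C]

/-- `ρ : A → A ⊗ C` is a (counital, coassociative) right `C`-comodule structure. -/
def IsComodule (ρ : A →ₗ[k] A ⊗[k] C) : Prop :=
  ((comul (R := k) (A := C)).lTensor A ∘ₗ ρ
      = (TensorProduct.assoc k A C C).toLinearMap ∘ₗ ρ.rTensor C ∘ₗ ρ)
  ∧ ((TensorProduct.rid k A).toLinearMap
      ∘ₗ (counit (R := k) (A := C)).lTensor A ∘ₗ ρ = LinearMap.id)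

/-- The coinvariants `B = A^{co C}` of a coaction `ρ`. -/
def coinvSet (ρ : A →ₗ[k] A ⊗[k] C) : Set A :=
  {b : A | ∀ a : A, ρ (b * a) = (LinearMap.mulLeft k b).rTensor C (ρ a)}

/-- The canonical map `A ⊗ A → A ⊗ C`, `a ⊗ a' ↦ a · ρ a'`, whose factorisation
through `A ⊗_B A` is the canonical Galois map `can`. -/
noncomputable def canF (ρ : A →ₗ[k] A ⊗[k] C) : A ⊗[k] A →ₗ[k] A ⊗[k] C :=
  (LinearMap.mul' k A).rTensor C ∘ₗ (TensorProduct.assoc k A A C).symm.toLinearMap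
    ∘ₗ ρ.lTensor A

/-- The kernel of `A ⊗ A ↠ A ⊗_B A`: the subspace spanned by
`a b ⊗ a' - a ⊗ b a'` for `b ∈ B = A^{co C}`. -/
noncomputable def relJ (ρ : A →ₗ[k] A ⊗[k] C) : Submodule k (A ⊗[k] A) :=
  Submodule.span k {x : A ⊗[k] A | ∃ (a a' b : A), b ∈ coinvSet ρ
    ∧ x = (a * b) ⊗ₜ[k] a' - a ⊗ₜ[k] (b * a')}

/-- `B ⊆ A` is a `C`-Galois extension: the canonical map
`can : A ⊗_B A → A ⊗ C` is bijective; equivalently, `canF ρ` is surjective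
with kernel exactly `relJ ρ`. -/
def IsCGalois (ρ : A →ₗ[k] A ⊗[k] C) : Prop :=
  Function.Surjective (canF ρ) ∧ LinearMap.ker (canF ρ) = relJ ρ

/-- A (linear) lift of the translation map `τ = can⁻¹(1 ⊗ -) : C → A ⊗_B A`
to `A ⊗ A`. -/
def IsTranslationLift (ρ : A →ₗ[k] A ⊗[k] C) (τ : C →ₗ[k] A ⊗[k] A) : Prop :=
  ∀ c : C, canF ρ (τ c) = (1 : A) ⊗ₜ[k] c

/-- The canonical entwining map `ψ = can ∘ (A ⊗_B m) ∘ (τ ⊗ A)` associated to a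
`C`-Galois extension, expressed through a lift `τ` of the translation map:
`ψ (c ⊗ a) = c⁽¹⁾ ((c⁽²⁾ a)₍₀₎) ⊗ (c⁽²⁾ a)₍₁₎`. -/
noncomputable def canPsi (ρ : A →ₗ[k] A ⊗[k] C) (τ : C →ₗ[k] A ⊗[k] A) :
    C ⊗[k] A →ₗ[k] A ⊗[k] C :=
  canF ρ ∘ₗ (LinearMap.mul' k A).lTensor A
    ∘ₗ (TensorProduct.assoc k A A A).toLinearMap ∘ₗ τ.rTensor A

/-- The right `A`-action `(m ⊗ C) ∘ (A ⊗ ψ)` on `A ⊗ C` induced by an entwining map. -/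
noncomputable def actPsi (ψ : C ⊗[k] A →ₗ[k] A ⊗[k] C) :
    (A ⊗[k] C) ⊗[k] A →ₗ[k] A ⊗[k] C :=
  (LinearMap.mul' k A).rTensor C ∘ₗ (TensorProduct.assoc k A A C).symm.toLinearMap
    ∘ₗ ψ.lTensor A ∘ₗ (TensorProduct.assoc k A C A).toLinearMap

/-!
Lifting the translation map to `τ : C → A ⊗ A`, one has `ψ(c ⊗ a) = can(τ(c) a)`, so
`(m ⊗ C) ∘ (A ⊗ ψ)` is the right `A`-action of `A ⊗_B A` transported to `A ⊗ C` along `can`,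
which gives multiplicativity; unitality is `can(τ c) = 1 ⊗ c`. Counitality follows from
counitality of `ρ`, since `(A ⊗ ε) ∘ can = m`. For the comultiplication axiom, coassociativity of `ρ` gives
`(A ⊗ Δ) ∘ can = (can ⊗ C) ∘ (A ⊗ ρ)`, and `(A ⊗ ρ)(τ c)` and `(τ ⊗ C)(Δ c)` have the same image
`1 ⊗ Δ c` under `can ⊗ C`. Their difference lies in `ker can ⊗ C`, by right exactness of `- ⊗ C`,
and the `B`-balanced map `(can ⊗ C) ∘ (A ⊗ ψ(- ⊗ a))` kills it.
-/

section Assoc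

variable {R M N P Q : Type*} [CommSemiring R] [AddCommMonoid M] [AddCommMonoid N]
  [AddCommMonoid P] [AddCommMonoid Q] [Module R M] [Module R N] [Module R P] [Module R Q]

lemma rTensor_assoc_symm_tmul (f : M ⊗[R] N →ₗ[R] P) (m : M) (w : N ⊗[R] Q) :
    f.rTensor Q ((TensorProduct.assoc R M N Q).symm (m ⊗ₜ w)) = (curry f m).rTensor Q w := by
  induction w using TensorProduct.induction_on with
  | zero => simp
  | tmul n q => simp
  | add x y hx hy => simp only [tmul_add, map_add, hx, hy]

lemma lTensor_assoc_tmul (f : N ⊗[R] P →ₗ[R] Q) (z : M ⊗[R] N) (p : P) :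
    f.lTensor M (TensorProduct.assoc R M N P (z ⊗ₜ p)) = ((curry f).flip p).lTensor M z := by
  induction z using TensorProduct.induction_on with
  | zero => simp
  | tmul m n => simp
  | add x y hx hy => simp only [add_tmul, map_add, hx, hy]

variable {S : Type*} [Semiring S] [Algebra R S]

lemma curry_mul' (u : S) : curry (LinearMap.mul' R S) u = mulLeft R u := rfl

lemma flip_curry_mul' (u : S) : (curry (LinearMap.mul' R S)).flip u = mulRight R u := rfl

lemma mul'_lTensor_mulRight (a : S) (x : S ⊗[R] S) :
    LinearMap.mul' R S ((mulRight R a).lTensor S x) = LinearMap.mul' R S x * a := by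
  induction x using TensorProduct.induction_on with
  | zero => simp
  | tmul u v => simp [mul_assoc]
  | add x y hx hy => simp only [map_add, hx, hy, add_mul]

end Assoc

section Canonical

omit [Coalgebra k C]

variable (ρ : A →ₗ[k] A ⊗[k] C)

lemma curry_canF (u : A) : curry (canF ρ) u = (mulLeft k u).rTensor C ∘ₗ ρ := by
  ext v
  simp [canF, rTensor_assoc_symm_tmul, curry_mul']

lemma canF_tmul (u v : A) : canF ρ (u ⊗ₜ v) = (mulLeft k u).rTensor C (ρ v) :=
  LinearMap.congr_fun (curry_canF ρ u) v

lemma canF_one_tmul (v : A) : canF ρ (1 ⊗ₜ v) = ρ v := by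
  simp [canF_tmul]

lemma canF_mulLeft_rTensor (b : A) (x : A ⊗[k] A) :
    canF ρ ((mulLeft k b).rTensor A x) = (mulLeft k b).rTensor C (canF ρ x) := by
  induction x using TensorProduct.induction_on with
  | zero => simp
  | tmul u v => simp [canF_tmul, mulLeft_mul, rTensor_comp]
  | add x y hx hy => simp only [map_add, hx, hy]

/-- `f` is `B`-balanced for `B = A^{co C}`, i.e. it factors through `A ⊗_B A`. -/
def IsCoinvBalanced {M : Type*} [AddCommGroup M] [Module k M] (f : A ⊗[k] A →ₗ[k] M) :
    Prop :=
  ∀ b ∈ coinvSet ρ, ∀ u v : A, f ((u * b) ⊗ₜ v) = f (u ⊗ₜ (b * v))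

lemma canF_isCoinvBalanced : IsCoinvBalanced ρ (canF ρ) := fun b hb u v => by
  rw [canF_tmul, canF_tmul, mulLeft_mul, rTensor_comp, comp_apply, ← hb]

lemma rTensor_canF_assoc_symm_mul_tmul {b : A} (hb : b ∈ coinvSet ρ) (u : A) (z : A ⊗[k] C) :
    (canF ρ).rTensor C ((TensorProduct.assoc k A A C).symm ((u * b) ⊗ₜ z))
      = (canF ρ).rTensor C ((TensorProduct.assoc k A A C).symm
          (u ⊗ₜ (mulLeft k b).rTensor C z)) := by
  have hρb : ρ ∘ₗ mulLeft k b = (mulLeft k b).rTensor C ∘ₗ ρ := LinearMap.ext hb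
  have : curry (canF ρ) (u * b) = curry (canF ρ) u ∘ₗ mulLeft k b := by
    rw [curry_canF, curry_canF, comp_assoc, hρb, mulLeft_mul, rTensor_comp, comp_assoc]
  rw [rTensor_assoc_symm_tmul, rTensor_assoc_symm_tmul, this, rTensor_comp, comp_apply]

variable {ρ} {M : Type*} [AddCommGroup M] [Module k M] {f : A ⊗[k] A →ₗ[k] M}

lemma IsCoinvBalanced.relJ_le_ker (hf : IsCoinvBalanced ρ f) : relJ ρ ≤ ker f := by
  rw [relJ, Submodule.span_le]
  rintro _ ⟨u, v, b, hb, rfl⟩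
  simp [hf b hb u v]

lemma IsCoinvBalanced.comp_mulRight_lTensor (hf : IsCoinvBalanced ρ f) (a : A) :
    IsCoinvBalanced ρ (f ∘ₗ (mulRight k a).lTensor A) := fun b hb u v => by
  simpa [mul_assoc] using hf b hb u (v * a)

lemma IsCGalois.ker_canF_le (hGal : IsCGalois ρ) (hf : IsCoinvBalanced ρ f) :
    ker (canF ρ) ≤ ker f :=
  hGal.2 ▸ hf.relJ_le_ker

/-- A `B`-linear endomorphism `g` of `A ⊗ C` induces `A ⊗_B g` on `A ⊗_B (A ⊗ C)`, which
`can ⊗ C` identifies with `(A ⊗ C) ⊗ C`; hence `(can ⊗ C) ∘ (A ⊗ g)` kills `ker (can ⊗ C)`. -/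
lemma IsCGalois.rTensor_canF_lTensor_eq_zero (hGal : IsCGalois ρ)
    (g : A ⊗[k] C →ₗ[k] A ⊗[k] C)
    (hg : ∀ b ∈ coinvSet ρ, ∀ w, g ((mulLeft k b).rTensor C w) = (mulLeft k b).rTensor C (g w))
    {y : (A ⊗[k] A) ⊗[k] C} (hy : (canF ρ).rTensor C y = 0) :
    (canF ρ).rTensor C ((TensorProduct.assoc k A A C).symm
      (g.lTensor A (TensorProduct.assoc k A A C y))) = 0 := by
  set Φ := (canF ρ).rTensor C ∘ₗ (TensorProduct.assoc k A A C).symm.toLinearMap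
    ∘ₗ g.lTensor A ∘ₗ (TensorProduct.assoc k A A C).toLinearMap
  have hΦ : Φ ∘ₗ (ker (canF ρ)).subtype.rTensor C = 0 := by
    refine TensorProduct.ext' fun j c => ?_
    have hbal : IsCoinvBalanced (M := (A ⊗[k] C) ⊗[k] C) ρ
        (Φ ∘ₗ (TensorProduct.mk k (A ⊗[k] A) C).flip c) := by
      intro b hb u v
      simpa [Φ, ← hg b hb] using rTensor_canF_assoc_symm_mul_tmul ρ hb u (g (v ⊗ₜ c))
    simpa using hGal.ker_canF_le hbal j.2
  obtain ⟨ξ, rfl⟩ : y ∈ range ((ker (canF ρ)).subtype.rTensor C) := by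
    rwa [← (rTensor_exact C (exact_subtype_ker_map _) hGal.1).linearMap_ker_eq]
  exact LinearMap.congr_fun hΦ ξ

variable {τ : C →ₗ[k] A ⊗[k] A}

variable (τ) in
/-- `u ⊗ c ↦ u c⁽¹⁾ ⊗ c⁽²⁾`, a lift of `can⁻¹` to `A ⊗ A`. -/
noncomputable def canInvLift : A ⊗[k] C →ₗ[k] A ⊗[k] A :=
  (LinearMap.mul' k A).rTensor A ∘ₗ (TensorProduct.assoc k A A A).symm.toLinearMap
    ∘ₗ τ.lTensor A

lemma canInvLift_tmul (u : A) (c : C) :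
    canInvLift τ (u ⊗ₜ c) = (mulLeft k u).rTensor A (τ c) := by
  simp [canInvLift, rTensor_assoc_symm_tmul, curry_mul']

lemma canF_canInvLift (hτ : IsTranslationLift ρ τ) (w : A ⊗[k] C) :
    canF ρ (canInvLift τ w) = w := by
  induction w using TensorProduct.induction_on with
  | zero => simp
  | tmul u c => simp [canInvLift_tmul, canF_mulLeft_rTensor, hτ c]
  | add x y hx hy => rw [map_add, map_add, hx, hy]

lemma canPsi_tmul (c : C) (a : A) :
    canPsi ρ τ (c ⊗ₜ a) = canF ρ ((mulRight k a).lTensor A (τ c)) := by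
  simp [canPsi, lTensor_assoc_tmul, flip_curry_mul']

lemma actPsi_tmul (ψ : C ⊗[k] A →ₗ[k] A ⊗[k] C) (u : A) (c : C) (a : A) :
    actPsi ψ ((u ⊗ₜ c) ⊗ₜ a) = (mulLeft k u).rTensor C (ψ (c ⊗ₜ a)) := by
  simp [actPsi, rTensor_assoc_symm_tmul, curry_mul']

lemma actPsi_mulLeft_rTensor (ψ : C ⊗[k] A →ₗ[k] A ⊗[k] C) (b : A) (w : A ⊗[k] C) (a : A) :
    actPsi ψ ((mulLeft k b).rTensor C w ⊗ₜ a)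
      = (mulLeft k b).rTensor C (actPsi ψ (w ⊗ₜ a)) := by
  induction w using TensorProduct.induction_on with
  | zero => simp
  | tmul u c => simp [actPsi_tmul, mulLeft_mul, rTensor_comp]
  | add x y hx hy => simp only [map_add, add_tmul, hx, hy]

lemma actPsi_canPsi (w : A ⊗[k] C) (a : A) :
    actPsi (canPsi ρ τ) (w ⊗ₜ a) = canF ρ ((mulRight k a).lTensor A (canInvLift τ w)) := by
  induction w using TensorProduct.induction_on with
  | zero => simp
  | tmul u c =>
    rw [actPsi_tmul, canPsi_tmul, canInvLift_tmul, ← canF_mulLeft_rTensor,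
      ← comp_apply (rTensor A _), ← comp_apply (lTensor A _) (rTensor A _),
      rTensor_comp_lTensor, lTensor_comp_rTensor]
  | add x y hx hy => simp only [map_add, add_tmul, hx, hy]

lemma actPsi_canPsi_canF (hGal : IsCGalois ρ) (hτ : IsTranslationLift ρ τ) (x : A ⊗[k] A)
    (a : A) : actPsi (canPsi ρ τ) (canF ρ x ⊗ₜ a) = canF ρ ((mulRight k a).lTensor A x) := by
  rw [actPsi_canPsi, ← sub_eq_zero, ← map_sub, ← map_sub]
  exact hGal.ker_canF_le ((canF_isCoinvBalanced ρ).comp_mulRight_lTensor a)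
    (by simp [canF_canInvLift hτ])

lemma actPsi_canPsi_rho (hGal : IsCGalois ρ) (hτ : IsTranslationLift ρ τ) (v a : A) :
    actPsi (canPsi ρ τ) (ρ v ⊗ₜ a) = ρ (v * a) := by
  simpa [canF_one_tmul] using actPsi_canPsi_canF hGal hτ (1 ⊗ₜ v) a

lemma lTensor_rho_mulRight (hGal : IsCGalois ρ) (hτ : IsTranslationLift ρ τ) (a : A)
    (x : A ⊗[k] A) :
    ρ.lTensor A ((mulRight k a).lTensor A x)
      = ((curry (actPsi (canPsi ρ τ))).flip a).lTensor A (ρ.lTensor A x) := by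
  have h : ρ ∘ₗ mulRight k a = (curry (actPsi (canPsi ρ τ))).flip a ∘ₗ ρ := by
    ext v
    simp [actPsi_canPsi_rho hGal hτ]
  rw [← comp_apply, ← lTensor_comp, h, lTensor_comp, comp_apply]

lemma canPsi_comp_lTensor_mul' (hGal : IsCGalois ρ) (hτ : IsTranslationLift ρ τ) :
    canPsi ρ τ ∘ₗ (LinearMap.mul' k A).lTensor C ∘ₗ (TensorProduct.assoc k C A A).toLinearMap
      = actPsi (canPsi ρ τ) ∘ₗ (canPsi ρ τ).rTensor A := by
  ext c a a'
  simp [canPsi_tmul, actPsi_canPsi_canF hGal hτ, mulRight_mul, lTensor_comp]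

lemma canPsi_tmul_one (hτ : IsTranslationLift ρ τ) (c : C) : canPsi ρ τ (c ⊗ₜ 1) = 1 ⊗ₜ c := by
  simp [canPsi_tmul, hτ c]

/-- Both sides send `x = u ⊗ v` and `w = p ⊗ q` to `can(u ⊗ v p) ⊗ q`. -/
lemma rTensor_canF_assoc_symm_lTensor (x : A ⊗[k] A) (w : A ⊗[k] C) :
    (canF ρ).rTensor C ((TensorProduct.assoc k A A C).symm
      (((curry ((LinearMap.mul' k A).rTensor C
        ∘ₗ (TensorProduct.assoc k A A C).symm.toLinearMap)).flip w).lTensor A x))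
      = (curry (canF ρ ∘ₗ (LinearMap.mul' k A).lTensor A
          ∘ₗ (TensorProduct.assoc k A A A).toLinearMap) x).rTensor C w := by
  induction x using TensorProduct.induction_on with
  | zero => simp
  | tmul u v =>
    have h : curry (canF ρ ∘ₗ (LinearMap.mul' k A).lTensor A
        ∘ₗ (TensorProduct.assoc k A A A).toLinearMap) (u ⊗ₜ v)
          = curry (canF ρ) u ∘ₗ mulLeft k v := by
      ext p
      simp
    simp [rTensor_assoc_symm_tmul, curry_mul', h, rTensor_comp]
  | add x y hx hy => simp only [map_add, rTensor_add, LinearMap.add_apply, hx, hy]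

lemma rTensor_canF_lTensor_act_rTensor (a : A) (d : C ⊗[k] C) :
    (canF ρ).rTensor C ((TensorProduct.assoc k A A C).symm
      (((curry (actPsi (canPsi ρ τ))).flip a).lTensor A
        (TensorProduct.assoc k A A C (τ.rTensor C d))))
      = (canPsi ρ τ).rTensor C ((TensorProduct.assoc k C A C).symm
          ((canPsi ρ τ).lTensor C (TensorProduct.assoc k C C A (d ⊗ₜ a)))) := by
  induction d using TensorProduct.induction_on with
  | zero => simp
  | tmul c₁ c₂ =>
    have h : (curry ((curry (actPsi (canPsi ρ τ))).flip a)).flip c₂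
        = (curry ((LinearMap.mul' k A).rTensor C
            ∘ₗ (TensorProduct.assoc k A A C).symm.toLinearMap)).flip (canPsi ρ τ (c₂ ⊗ₜ a)) := by
      ext v
      simp [actPsi_tmul, rTensor_assoc_symm_tmul, curry_mul']
    rw [rTensor_tmul, lTensor_assoc_tmul, h, rTensor_canF_assoc_symm_lTensor, assoc_tmul,
      lTensor_tmul, rTensor_assoc_symm_tmul]
    rfl
  | add x y hx hy => simp only [map_add, add_tmul, hx, hy]

end Canonical

section Comodule

variable {ρ : A →ₗ[k] A ⊗[k] C} {τ : C →ₗ[k] A ⊗[k] A}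

lemma rid_counit_lTensor_canF (hρ : IsComodule ρ) (x : A ⊗[k] A) :
    TensorProduct.rid k A ((counit (R := k) (A := C)).lTensor A (canF ρ x))
      = LinearMap.mul' k A x := by
  induction x using TensorProduct.induction_on with
  | zero => simp
  | tmul u v =>
    have hnat : (TensorProduct.rid k A).toLinearMap ∘ₗ (counit (R := k) (A := C)).lTensor A
        ∘ₗ (mulLeft k u).rTensor C
          = mulLeft k u ∘ₗ (TensorProduct.rid k A).toLinearMap ∘ₗ counit.lTensor A := by
      ext p c
      simp
    have hv : TensorProduct.rid k A ((counit (R := k) (A := C)).lTensor A (ρ v)) = v :=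
      LinearMap.congr_fun hρ.2 v
    rw [canF_tmul, mul'_apply]
    conv_rhs => rw [← hv]
    exact LinearMap.congr_fun hnat (ρ v)
  | add x y hx hy => simp only [map_add, hx, hy]

lemma mul'_translation (hρ : IsComodule ρ) (hτ : IsTranslationLift ρ τ) (c : C) :
    LinearMap.mul' k A (τ c) = counit (R := k) c • (1 : A) := by
  simpa [hτ c] using (rid_counit_lTensor_canF hρ (τ c)).symm

lemma rid_counit_lTensor_comp_canPsi (hρ : IsComodule ρ) (hτ : IsTranslationLift ρ τ) :
    (TensorProduct.rid k A).toLinearMap ∘ₗ (counit (R := k) (A := C)).lTensor A ∘ₗ canPsi ρ τ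
      = (TensorProduct.lid k A).toLinearMap ∘ₗ (counit (R := k) (A := C)).rTensor A := by
  ext c a
  simp [canPsi_tmul, rid_counit_lTensor_canF hρ, mul'_lTensor_mulRight, mul'_translation hρ hτ]

lemma comul_lTensor_canF (hρ : IsComodule ρ) (x : A ⊗[k] A) :
    (comul (R := k) (A := C)).lTensor A (canF ρ x)
      = TensorProduct.assoc k A C C
          ((canF ρ).rTensor C ((TensorProduct.assoc k A A C).symm (ρ.lTensor A x))) := by
  induction x using TensorProduct.induction_on with
  | zero => simp
  | tmul u v =>
    have hcoassoc : (comul (R := k) (A := C)).lTensor A (ρ v)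
        = TensorProduct.assoc k A C C (ρ.rTensor C (ρ v)) := LinearMap.congr_fun hρ.1 v
    rw [canF_tmul, lTensor_tmul, rTensor_assoc_symm_tmul, curry_canF, ← comp_apply (lTensor A _),
      lTensor_comp_rTensor, ← rTensor_comp_lTensor, comp_apply, hcoassoc, rTensor_tensor,
      rTensor_comp]
    simp only [coe_comp, Function.comp_apply, LinearEquiv.coe_coe, LinearEquiv.symm_apply_apply]
  | add x y hx hy => simp only [map_add, hx, hy]

lemma rTensor_canF_assoc_symm_lTensor_rho (hρ : IsComodule ρ) (hτ : IsTranslationLift ρ τ)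
    (c : C) :
    (canF ρ).rTensor C ((TensorProduct.assoc k A A C).symm (ρ.lTensor A (τ c)))
      = (canF ρ).rTensor C (τ.rTensor C (comul (R := k) c)) := by
  have hcanτ : canF ρ ∘ₗ τ = TensorProduct.mk k A C 1 := LinearMap.ext hτ
  rw [← (LinearEquiv.symm_apply_eq _).mpr (comul_lTensor_canF hρ (τ c)), hτ c, lTensor_tmul,
    ← comp_apply (rTensor C _), ← rTensor_comp, hcanτ]
  induction comul (R := k) c using TensorProduct.induction_on with
  | zero => simp
  | tmul c₁ c₂ => simp
  | add x y hx hy => simp only [map_add, tmul_add, hx, hy]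

lemma comul_lTensor_comp_canPsi (hρ : IsComodule ρ) (hGal : IsCGalois ρ)
    (hτ : IsTranslationLift ρ τ) :
    (comul (R := k) (A := C)).lTensor A ∘ₗ canPsi ρ τ
      = (TensorProduct.assoc k A C C).toLinearMap ∘ₗ (canPsi ρ τ).rTensor C
        ∘ₗ (TensorProduct.assoc k C A C).symm.toLinearMap ∘ₗ (canPsi ρ τ).lTensor C
        ∘ₗ (TensorProduct.assoc k C C A).toLinearMap ∘ₗ (comul (R := k) (A := C)).rTensor A := by
  refine TensorProduct.ext' fun c a => ?_
  set act := (curry (actPsi (canPsi ρ τ))).flip a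
  have hτc : (canF ρ).rTensor C ((TensorProduct.assoc k A A C).symm (ρ.lTensor A (τ c))
      - τ.rTensor C (comul c)) = 0 := by
    rw [map_sub, rTensor_canF_assoc_symm_lTensor_rho hρ hτ, sub_self]
  have hker := hGal.rTensor_canF_lTensor_eq_zero act
    (fun b _ w => actPsi_mulLeft_rTensor _ b w a) hτc
  simp only [map_sub, sub_eq_zero, LinearEquiv.apply_symm_apply] at hker
  simp only [coe_comp, LinearEquiv.coe_coe, Function.comp_apply, rTensor_tmul]
  rw [canPsi_tmul, comul_lTensor_canF hρ, lTensor_rho_mulRight hGal hτ, hker,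
    rTensor_canF_lTensor_act_rTensor]

end Comodule

/-- the canonical map `ψ = can ∘ (A ⊗_B m) ∘ (τ ⊗ A)` of a `C`-Galois
extension is an entwining map. -/
theorem canPsi_isEntwining (ρ : A →ₗ[k] A ⊗[k] C)
    (hρ : IsComodule ρ) (hGal : IsCGalois ρ)
    (τ : C →ₗ[k] A ⊗[k] A) (hτ : IsTranslationLift ρ τ) :
    IsEntwining (canPsi ρ τ) :=
  ⟨canPsi_comp_lTensor_mul' hGal hτ, canPsi_tmul_one hτ, comul_lTensor_comp_canPsi hρ hGal hτ,
    rid_counit_lTensor_comp_canPsi hρ hτ⟩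
end

section
/- Let (A, C, ψ) be an entwining structure and κ : A → k an algebra character. Then μ_C := (κ ⊗ C) ∘ ψ : C ⊗ A → C is a right A-action on C satisfying ε ∘ μ_C = ε ⊗ κ, and C ∈ M_A^C(ψ), i.e. Δ ∘ μ_C = (μ_C ⊗ C) ∘ (C ⊗ ψ) ∘ (Δ ⊗ A). -/
open TensorProduct LinearMap Coalgebra

variable {k A C : Type*} [Field k] [Ring A] [Algebra k A]
  [AddCommGroup C] [Module k C] [Coalgebra k C]

/-- `μ : C ⊗ A → C` is a unital, associative right `A`-action on `C`. -/
def IsAction (μ : C ⊗[k] A →ₗ[k] C) : Prop :=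
  (∀ c : C, μ (c ⊗ₜ[k] (1 : A)) = c)
  ∧ (∀ (c : C) (a a' : A), μ (μ (c ⊗ₜ[k] a) ⊗ₜ[k] a') = μ (c ⊗ₜ[k] (a * a')))

/-- cf. Proposition 2.6 of [BrzMa:coa]: for an entwining structure
`(A,C,ψ)` and an algebra character `κ : A → k`, the map `μ_C := (κ ⊗ C) ∘ ψ` is a
right `A`-action on `C` with `ε ∘ μ_C = ε ⊗ κ`, and `C ∈ M_A^C(ψ)`, i.e.
`Δ ∘ μ_C = (μ_C ⊗ C) ∘ (C ⊗ ψ) ∘ (Δ ⊗ A)`. -/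
theorem character_action (ψ : C ⊗[k] A →ₗ[k] A ⊗[k] C) (hψ : IsEntwining ψ)
    (κ : A →ₐ[k] k) :
    letI μ : C ⊗[k] A →ₗ[k] C :=
      (TensorProduct.lid k C).toLinearMap ∘ₗ κ.toLinearMap.rTensor C ∘ₗ ψ
    IsAction μ
    ∧ (∀ (c : C) (a : A), counit (R := k) (μ (c ⊗ₜ[k] a)) = counit (R := k) c * κ a)
    ∧ (comul (R := k) (A := C) ∘ₗ μ
        = μ.rTensor C ∘ₗ (TensorProduct.assoc k C A C).symm.toLinearMap
          ∘ₗ ψ.lTensor C ∘ₗ (TensorProduct.assoc k C C A).toLinearMap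
          ∘ₗ (comul (R := k) (A := C)).rTensor A) := by
  
  classical
  set μ : C ⊗[k] A →ₗ[k] C :=
    (TensorProduct.lid k C).toLinearMap ∘ₗ κ.toLinearMap.rTensor C ∘ₗ ψ with hμdef
  set f : A ⊗[k] C →ₗ[k] C :=
    (TensorProduct.lid k C).toLinearMap ∘ₗ κ.toLinearMap.rTensor C with hfdef
  have hf : ∀ (b : A) (c : C), f (b ⊗ₜ[k] c) = κ b • c := by
    intro b c; simp [hfdef]
  have hμ : ∀ x : C ⊗[k] A, μ x = f (ψ x) := fun _ => rfl
  have hμf : μ = f ∘ₗ ψ := rfl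
  -- inner lemma for associativity
  have inner : ∀ (b : A) (y : A ⊗[k] C),
      f ((LinearMap.mul' k A).rTensor C ((TensorProduct.assoc k A A C).symm (b ⊗ₜ[k] y)))
        = κ b • f y := by
    intro b y
    induction y using TensorProduct.induction_on with
    | zero => simp
    | tmul b' c' => simp [hf, map_mul, mul_smul]
    | add u v hu hv => simp [tmul_add, hu, hv, smul_add]
  have key : ∀ (x : A ⊗[k] C) (a' : A),
      f ((LinearMap.mul' k A).rTensor C ((TensorProduct.assoc k A A C).symm
          (ψ.lTensor A ((TensorProduct.assoc k A C A) (x ⊗ₜ[k] a')))))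
        = f (ψ (f x ⊗ₜ[k] a')) := by
    intro x a'
    induction x using TensorProduct.induction_on with
    | zero => simp
    | tmul b c =>
        rw [assoc_tmul, lTensor_tmul, inner b (ψ (c ⊗ₜ[k] a')), hf]
        rw [← smul_tmul', map_smul, map_smul]
    | add u v hu hv =>
        simp only [map_add, add_tmul]
        rw [hu, hv]
  refine ⟨⟨?_, ?_⟩, ?_, ?_⟩
  · intro c
    rw [hμ, hψ.2.1, hf, map_one, one_smul]
  · intro c a a'
    have h1 := LinearMap.congr_fun hψ.1 ((c ⊗ₜ[k] a) ⊗ₜ[k] a')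
    simp only [LinearMap.comp_apply, LinearEquiv.coe_coe, assoc_tmul, lTensor_tmul,
      rTensor_tmul, LinearMap.mul'_apply] at h1
    rw [hμ (c ⊗ₜ[k] (a * a')), h1, key, ← hμ, ← hμ]
  · intro c a
    have h2 := LinearMap.congr_fun hψ.2.2.2 (c ⊗ₜ[k] a)
    simp only [LinearMap.comp_apply, LinearEquiv.coe_coe, rTensor_tmul, lid_tmul] at h2
    have e1 : ∀ y : A ⊗[k] C,
        counit (R := k) (f y)
          = κ ((TensorProduct.rid k A) ((counit (R := k) (A := C)).lTensor A y)) := by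
      intro y
      induction y using TensorProduct.induction_on with
      | zero => simp
      | tmul b c' => simp [hf, rid_tmul, mul_comm, Algebra.smul_def]
      | add u v hu hv => simp [hu, hv]
    rw [hμ, e1, h2]
    simp [Algebra.smul_def, mul_comm]
  · -- the comodule algebra compatibility
    set g : A ⊗[k] (C ⊗[k] C) →ₗ[k] C ⊗[k] C :=
      (TensorProduct.lid k (C ⊗[k] C)).toLinearMap ∘ₗ κ.toLinearMap.rTensor (C ⊗[k] C)
      with hgdef
    have hΔf : (comul (R := k) (A := C)) ∘ₗ f
        = g ∘ₗ (comul (R := k) (A := C)).lTensor A := by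
      apply TensorProduct.ext'
      intro b c
      simp [hf, hgdef]
    have hg : g ∘ₗ (TensorProduct.assoc k A C C).toLinearMap = f.rTensor C := by
      apply TensorProduct.ext_threefold
      intro b c' c''
      simp [hf, hgdef, smul_tmul']
    apply TensorProduct.ext'
    intro c a
    have h3 := LinearMap.congr_fun hψ.2.2.1 (c ⊗ₜ[k] a)
    simp only [LinearMap.comp_apply, LinearEquiv.coe_coe] at h3
    simp only [LinearMap.comp_apply, LinearEquiv.coe_coe]
    have hg' : ∀ z : (A ⊗[k] C) ⊗[k] C,
        g ((TensorProduct.assoc k A C C) z) = f.rTensor C z := by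
      intro z; simpa using LinearMap.congr_fun hg z
    rw [hμ, ← LinearMap.comp_apply (comul (R := k) (A := C)) f, hΔf,
      LinearMap.comp_apply, h3, hg',
      ← LinearMap.comp_apply (f.rTensor C), ← LinearMap.rTensor_comp, ← hμf]
end
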